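/- arXiv:1705.00439 — 9 statements merged into one kernel-verified Lean document; each statement's English description precedes it below -/
import Mathlib

section
/- For all real numbers a, b with 0 ≤ a ≤ 1 and 0 ≤ b ≤ 1, one has √(ab) + √((1-a)(1-b)) ≤ 1 - (1/2)(b-a)^2. -/
theorem key_sqrt_aux (u v s t : ℝ) (hu : 0 ≤ u) (hv : 0 ≤ v) (hs : 0 ≤ s) (ht : 0 ≤ t)
    (h1 : u^2 + s^2 = 1) (h2 : v^2 + t^2 = 1) :
    u*v + s*t ≤ 1 - (1/2) * (v^2 - u^2)^2 := by
  rcases le_or_gt ((u+v)^2) 1 with h | h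
  · nlinarith [sq_nonneg (u-v), sq_nonneg (s-t), sq_nonneg ((u-v)*(u+v)), mul_nonneg (sq_nonneg (u-v)) (sub_nonneg.2 h)]
  · have e : (s-t)*(s+t) = -((u-v)*(u+v)) := by linear_combination h1 - h2
    have hA : (s-t)^2*(s+t)^2 = (u-v)^2*(u+v)^2 := by
      linear_combination ((s-t)*(s+t) - (u-v)*(u+v)) * e
    have hB : (s+t)^2 ≤ 4 - 2*u^2 - 2*v^2 := by nlinarith [sq_nonneg (s-t)]
    have t1 : 0 ≤ (s-t)^2 * ((4-2*u^2-2*v^2) - (s+t)^2) :=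
      mul_nonneg (sq_nonneg _) (by linarith)
    have t2 : 0 ≤ (u-v)^2 * (((u+v)^2-1) * (2*(u^2+v^2) - (u+v)^2)) :=
      mul_nonneg (sq_nonneg _) (mul_nonneg (by linarith) (by nlinarith [sq_nonneg (u-v)]))
    have t3 : 0 ≤ (u-v)^2 * ((u+v)^2-2)^2 := mul_nonneg (sq_nonneg _) (sq_nonneg _)
    have h4S : 0 ≤ 4 - 2*u^2 - 2*v^2 := by nlinarith [sq_nonneg s, sq_nonneg t]
    nlinarith [t1, t2, t3, hA, h4S]

theorem stmt2 (a b : ℝ) (ha : a ∈ Set.Icc (0:ℝ) 1) (hb : b ∈ Set.Icc (0:ℝ) 1) :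
    Real.sqrt (a * b) + Real.sqrt ((1 - a) * (1 - b)) ≤ 1 - (1 / 2) * (b - a) ^ 2 := by
  obtain ⟨ha0, ha1⟩ := ha
  obtain ⟨hb0, hb1⟩ := hb
  have hu : Real.sqrt a ^ 2 = a := Real.sq_sqrt ha0
  have hv : Real.sqrt b ^ 2 = b := Real.sq_sqrt hb0
  have hs : Real.sqrt (1-a) ^ 2 = 1 - a := Real.sq_sqrt (by linarith)
  have ht : Real.sqrt (1-b) ^ 2 = 1 - b := Real.sq_sqrt (by linarith)
  have h1 : Real.sqrt (a*b) = Real.sqrt a * Real.sqrt b := Real.sqrt_mul ha0 b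
  have h2 : Real.sqrt ((1-a)*(1-b)) = Real.sqrt (1-a) * Real.sqrt (1-b) :=
    Real.sqrt_mul (by linarith) _
  rw [h1, h2]
  have := key_sqrt_aux (Real.sqrt a) (Real.sqrt b) (Real.sqrt (1-a)) (Real.sqrt (1-b))
    (Real.sqrt_nonneg _) (Real.sqrt_nonneg _) (Real.sqrt_nonneg _) (Real.sqrt_nonneg _)
    (by rw [hu, hs]; ring) (by rw [hv, ht]; ring)
  rw [hu, hv] at this
  linarith
end

section
/- For all real numbers a, b with 1/3 ≤ a ≤ 2/3 and 1/3 ≤ b ≤ 2/3, one has √(ab) + √((1-a)(1-b)) ≥ 1 - (9/16)(b-a)^2. -/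
lemma stmt3_aux (a b : ℝ) (ha1 : 1/3 ≤ a) (ha2 : a ≤ 2/3) (hb1 : 1/3 ≤ b) (hb2 : b ≤ 2/3) :
    ((a+b)/2 - ((a+b)/2)^2 - (5/4)*((b-a)/2)^2 + (81/32)*((b-a)/2)^4)^2
      ≤ (a*b)*((1-a)*(1-b)) := by
  have hu : (0:ℝ) ≤ (a+b)/2 - 1/3 := by linarith
  have hv : (0:ℝ) ≤ 2/3 - (a+b)/2 := by linarith
  have hd2u : ((b-a)/2)^2 ≤ ((a+b)/2 - 1/3)^2 := by
    nlinarith [mul_nonneg (by linarith : (0:ℝ) ≤ a - 1/3) (by linarith : (0:ℝ) ≤ b - 1/3)]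
  have hd2v : ((b-a)/2)^2 ≤ (2/3 - (a+b)/2)^2 := by
    nlinarith [mul_nonneg (by linarith : (0:ℝ) ≤ 2/3 - a) (by linarith : (0:ℝ) ≤ 2/3 - b)]
  have hduv : ((b-a)/2)^2 ≤ ((a+b)/2 - 1/3) * (2/3 - (a+b)/2) := by
    nlinarith [mul_le_mul hd2u hd2v (sq_nonneg ((b-a)/2)) (sq_nonneg ((a+b)/2 - 1/3)),
      mul_nonneg hu hv]
  have hd36 : ((b-a)/2)^2 ≤ 1/36 := by
    nlinarith [mul_nonneg (by linarith : (0:ℝ) ≤ 1/3 - (b-a)) (by linarith : (0:ℝ) ≤ 1/3 + (b-a))]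
  have t1 : (0:ℝ) ≤ (((a+b)/2 - 1/3) * (2/3 - (a+b)/2)) * ((b-a)/2)^2 :=
    mul_nonneg (mul_nonneg hu hv) (sq_nonneg _)
  have t2 : (0:ℝ) ≤ (((a+b)/2 - 1/3) * (2/3 - (a+b)/2) - ((b-a)/2)^2) * ((b-a)/2)^2 :=
    mul_nonneg (by linarith) (sq_nonneg _)
  have t3 : (0:ℝ) ≤ ((a+b)/2 - 1/2)^2 * (((b-a)/2)^2)^2 :=
    mul_nonneg (sq_nonneg _) (sq_nonneg _)
  have t4 : (0:ℝ) ≤ (405/64 - (6561/1024)*((b-a)/2)^2) * (((b-a)/2)^2)^3 :=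
    mul_nonneg (by linarith) (by positivity)
  nlinarith [t1, t2, t3, t4]

theorem stmt3 (a b : ℝ) (ha : a ∈ Set.Icc (1/3 : ℝ) (2/3)) (hb : b ∈ Set.Icc (1/3 : ℝ) (2/3)) :
    1 - (9 / 16) * (b - a) ^ 2 ≤ Real.sqrt (a * b) + Real.sqrt ((1 - a) * (1 - b)) := by
  obtain ⟨ha1, ha2⟩ := ha
  obtain ⟨hb1, hb2⟩ := hb
  have key := stmt3_aux a b ha1 ha2 hb1 hb2
  have hab : (0:ℝ) ≤ a * b := by nlinarith
  have hab' : (0:ℝ) ≤ (1 - a) * (1 - b) := by nlinarith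
  have hx2 : (Real.sqrt (a * b)) ^ 2 = a * b := Real.sq_sqrt hab
  have hy2 : (Real.sqrt ((1 - a) * (1 - b))) ^ 2 = (1 - a) * (1 - b) := Real.sq_sqrt hab'
  have hx0 : 0 ≤ Real.sqrt (a * b) := Real.sqrt_nonneg _
  have hy0 : 0 ≤ Real.sqrt ((1 - a) * (1 - b)) := Real.sqrt_nonneg _
  have hxy : (a+b)/2 - ((a+b)/2)^2 - (5/4)*((b-a)/2)^2 + (81/32)*((b-a)/2)^4
      ≤ Real.sqrt (a * b) * Real.sqrt ((1 - a) * (1 - b)) := by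
    rcases le_or_gt ((a+b)/2 - ((a+b)/2)^2 - (5/4)*((b-a)/2)^2 + (81/32)*((b-a)/2)^4) 0 with hc | hc
    · exact hc.trans (mul_nonneg hx0 hy0)
    · rw [← Real.sqrt_mul hab, Real.le_sqrt hc.le]
      exact key
      exact mul_nonneg hab hab'
  have hR : (0:ℝ) ≤ 1 - (9 / 16) * (b - a) ^ 2 := by nlinarith
  have hS2 : (1 - (9 / 16) * (b - a) ^ 2)^2
      ≤ (Real.sqrt (a * b) + Real.sqrt ((1 - a) * (1 - b)))^2 := by nlinarith [hxy, hx2, hy2]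
  have h := Real.sqrt_le_sqrt hS2
  rwa [Real.sqrt_sq hR, Real.sqrt_sq (by positivity)] at h
end

section
/- For all real numbers a, b with 1/3 ≤ a ≤ 2/3 and 1/3 ≤ b ≤ 2/3, one has log(√(ab) + √((1-a)(1-b))) ≥ -(3/5)(b-a)^2. -/
set_option maxHeartbeats 1000000

private lemma red (A B t : ℝ) (hA : 4/3 ≤ A) (hB : 4/3 ≤ B) (ht : 0 ≤ t) (ht9 : t ≤ 1/9)
    (htA : t ≤ A*(A-4/3)) (htB : t ≤ B*(B-4/3))
    (heq : A*B*(A+B) + t*(A+B) = 4*(A*B)) :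
    (A+B)*(5+3*t) ≤ 6*(A*B) := by
  nlinarith [sq_nonneg (A-B), sq_nonneg (A+B-4), mul_pos (by linarith : (0:ℝ)<A) (by linarith : (0:ℝ)<B), sq_nonneg (A*B-32/9), mul_nonneg ht (sq_nonneg (A-B)), mul_nonneg (mul_nonneg ht ht) (by linarith : (0:ℝ) ≤ A+B)]

private lemma red2 (A B P Q t : ℝ) (hA : 4/3 ≤ A) (hB : 4/3 ≤ B) (ht : 0 ≤ t) (ht9 : t ≤ 1/9)
    (htA : t ≤ A*(A-4/3)) (htB : t ≤ B*(B-4/3))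
    (hP : P*A = t) (hQ : Q*B = t) (hsum : A+B+P+Q = 4) :
    20 ≤ (A+B-P-Q)*(5+3*t) := by
  have hABpos : (0:ℝ) < A*B := mul_pos (by linarith) (by linarith)
  have heq : A*B*(A+B) + t*(A+B) = 4*(A*B) := by
    linear_combination (A*B)*hsum - B*hP - A*hQ
  have main := red A B t hA hB ht ht9 htA htB heq
  have hid : (P+Q)*(5+3*t)*(A*B) = t*((A+B)*(5+3*t)) := by
    linear_combination (5+3*t)*B*hP + (5+3*t)*A*hQ
  have h2 : (P+Q)*(5+3*t)*(A*B) ≤ (6*t)*(A*B) := by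
    calc (P+Q)*(5+3*t)*(A*B) = t*((A+B)*(5+3*t)) := hid
      _ ≤ t*(6*(A*B)) := mul_le_mul_of_nonneg_left main ht
      _ = (6*t)*(A*B) := by ring
  have h3 : (P+Q)*(5+3*t) ≤ 6*t := le_of_mul_le_mul_right h2 hABpos
  nlinarith [h3, ht, hsum]

private lemma key (u v w z : ℝ) (hu : 0 ≤ u) (hv : 0 ≤ v) (hw : 0 ≤ w) (hz : 0 ≤ z)
    (h1 : u^2 + w^2 = 1) (h2 : v^2 + z^2 = 1)
    (ha1 : 1/3 ≤ u^2) (ha2 : u^2 ≤ 2/3) (hb1 : 1/3 ≤ v^2) (hb2 : v^2 ≤ 2/3) :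
    5 ≤ (u*v + w*z) * (5 + 3*(v^2-u^2)^2) := by
  have huv : 1/3 ≤ u*v := by
    nlinarith [mul_nonneg hu hv, sq_nonneg (u*v - 1/3), sq_nonneg (u*v + 1/3)]
  have hwz : 1/3 ≤ w*z := by
    nlinarith [mul_nonneg hw hz, sq_nonneg (w*z - 1/3), sq_nonneg (w*z + 1/3)]
  have hA : 4/3 ≤ (u+v)^2 := by nlinarith
  have hB : 4/3 ≤ (w+z)^2 := by nlinarith
  have ht : (0:ℝ) ≤ (v^2-u^2)^2 := sq_nonneg _
  have ht9 : (v^2-u^2)^2 ≤ 1/9 := by nlinarith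
  have htA : (v^2-u^2)^2 ≤ (u+v)^2*((u+v)^2-4/3) := by
    nlinarith [mul_nonneg (by linarith : (0:ℝ) ≤ u*v - 1/3) (sq_nonneg (u+v))]
  have heqt : (v^2-u^2)^2 = (w^2-z^2)^2 := by
    linear_combination (v^2 - u^2 + w^2 - z^2) * h2 - (v^2 - u^2 + w^2 - z^2) * h1
  have htB : (v^2-u^2)^2 ≤ (w+z)^2*((w+z)^2-4/3) := by
    rw [heqt]
    nlinarith [mul_nonneg (by linarith : (0:ℝ) ≤ w*z - 1/3) (sq_nonneg (w+z))]
  have hP : (u-v)^2*(u+v)^2 = (v^2-u^2)^2 := by ring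
  have hQ : (w-z)^2*(w+z)^2 = (v^2-u^2)^2 := by rw [heqt]; ring
  have hsum : (u+v)^2+(w+z)^2+(u-v)^2+(w-z)^2 = 4 := by linear_combination 2*h1 + 2*h2
  have conc := red2 ((u+v)^2) ((w+z)^2) ((u-v)^2) ((w-z)^2) ((v^2-u^2)^2)
    hA hB ht ht9 htA htB hP hQ hsum
  have h4 : (u+v)^2+(w+z)^2-(u-v)^2-(w-z)^2 = 4*(u*v+w*z) := by ring
  rw [h4] at conc
  nlinarith [conc]

theorem stmt4 (a b : ℝ) (ha : a ∈ Set.Icc (1/3 : ℝ) (2/3)) (hb : b ∈ Set.Icc (1/3 : ℝ) (2/3)) :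
    -(3 / 5) * (b - a) ^ 2 ≤ Real.log (Real.sqrt (a * b) + Real.sqrt ((1 - a) * (1 - b))) := by
  obtain ⟨ha1, ha2⟩ := ha
  obtain ⟨hb1, hb2⟩ := hb
  have ha0 : (0:ℝ) ≤ a := by linarith
  have hb0 : (0:ℝ) ≤ b := by linarith
  have ha0' : (0:ℝ) ≤ 1 - a := by linarith
  have hb0' : (0:ℝ) ≤ 1 - b := by linarith
  have hu2 : (Real.sqrt a)^2 = a := Real.sq_sqrt ha0
  have hv2 : (Real.sqrt b)^2 = b := Real.sq_sqrt hb0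
  have hw2 : (Real.sqrt (1-a))^2 = 1-a := Real.sq_sqrt ha0'
  have hz2 : (Real.sqrt (1-b))^2 = 1-b := Real.sq_sqrt hb0'
  have hmul1 : Real.sqrt (a*b) = Real.sqrt a * Real.sqrt b := Real.sqrt_mul ha0 b
  have hmul2 : Real.sqrt ((1-a)*(1-b)) = Real.sqrt (1-a) * Real.sqrt (1-b) :=
    Real.sqrt_mul ha0' (1-b)
  have key5 : 5 ≤ (Real.sqrt a * Real.sqrt b + Real.sqrt (1-a) * Real.sqrt (1-b)) *
      (5 + 3*(b-a)^2) := by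
    have := key (Real.sqrt a) (Real.sqrt b) (Real.sqrt (1-a)) (Real.sqrt (1-b))
      (Real.sqrt_nonneg a) (Real.sqrt_nonneg b) (Real.sqrt_nonneg (1-a)) (Real.sqrt_nonneg (1-b))
      (by rw [hu2, hw2]; ring) (by rw [hv2, hz2]; ring)
      (by rw [hu2]; exact ha1) (by rw [hu2]; exact ha2)
      (by rw [hv2]; exact hb1) (by rw [hv2]; exact hb2)
    rwa [hu2, hv2] at this
  set s := Real.sqrt a * Real.sqrt b + Real.sqrt (1-a) * Real.sqrt (1-b) with hs_def
  have hspos : 0 < s := by nlinarith [key5, sq_nonneg (b-a)]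
  rw [hmul1, hmul2, ← hs_def]
  rw [Real.le_log_iff_exp_le hspos]
  have hpos : (0:ℝ) < 1 + 3/5*(b-a)^2 := by positivity
  have hexp : 1 + 3/5*(b-a)^2 ≤ Real.exp (3/5*(b-a)^2) := by
    linarith [Real.add_one_le_exp (3/5*(b-a)^2)]
  calc Real.exp (-(3/5) * (b-a)^2) = (Real.exp (3/5*(b-a)^2))⁻¹ := by
        rw [← Real.exp_neg]; congr 1; ring
    _ ≤ (1 + 3/5*(b-a)^2)⁻¹ := by
        apply inv_anti₀ hpos hexp
    _ ≤ s := by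
        rw [inv_eq_one_div, div_le_iff₀ hpos]
        nlinarith [key5]
end

section
/- Let (a_n)_{n ≥ 0} be a decreasing sequence of strictly positive reals, let λ > 0 and n₀ ∈ ℤ. Define F : ℤ → (0, ∞) by F(n) = λ + a_{n - n₀} if n ≥ n₀ and F(n) = λ if n < n₀. For k ∈ ℤ define c_k : ℤ → ℝ by c_k(n) = F(n) - F(n - k). Then c_k ∈ ℓ²(ℤ) and ∑_{n=0}^{|k|-1} a_n² ≤ ‖c_k‖₂² ≤ 2 ∑_{n=0}^{|k|-1} a_n² for every k ∈ ℤ. -/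
theorem stmt6 (a : ℕ → ℝ) (ha : Antitone a) (hpos : ∀ n, 0 < a n)
    (l : ℝ) (hl : 0 < l) (n₀ : ℤ)
    (F : ℤ → ℝ) (hF : ∀ n : ℤ, F n = if n₀ ≤ n then l + a (n - n₀).toNat else l)
    (c : ℤ → ℤ → ℝ) (hc : ∀ k n, c k n = F n - F (n - k)) (k : ℤ) :
    Summable (fun n : ℤ => (c k n) ^ 2) ∧
      ∑ n ∈ Finset.range k.natAbs, (a n) ^ 2 ≤ ∑' n : ℤ, (c k n) ^ 2 ∧
      ∑' n : ℤ, (c k n) ^ 2 ≤ 2 * ∑ n ∈ Finset.range k.natAbs, (a n) ^ 2 := by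
  set m : ℕ := k.natAbs with hm
  set S : ℝ := ∑ n ∈ Finset.range m, (a n) ^ 2 with hS
  have hann : ∀ n, 0 ≤ a n := fun n => (hpos n).le
  have hSnn : 0 ≤ S := Finset.sum_nonneg fun i _ => sq_nonneg _
  set b : ℕ → ℝ := fun j => (a j - if m ≤ j then a (j - m) else 0) ^ 2 with hb
  have hbnn : ∀ j, 0 ≤ b j := fun j => sq_nonneg _
  have hb_lt : ∀ j < m, b j = (a j) ^ 2 := by
    intro j hj
    simp [hb, Nat.not_le.mpr hj]
  have hb_ge : ∀ j, m ≤ j → b j ≤ (a (j - m)) ^ 2 - (a j) ^ 2 := by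
    intro j hj
    have h1 : a j ≤ a (j - m) := ha (Nat.sub_le j m)
    have h2 : 0 ≤ a j := hann j
    simp only [hb, if_pos hj]
    nlinarith
  have hpartial : ∀ N, ∑ j ∈ Finset.range N, b j ≤ 2 * S := by
    intro N
    rcases le_or_gt N m with h | h
    · calc ∑ j ∈ Finset.range N, b j
          ≤ ∑ j ∈ Finset.range m, b j :=
            Finset.sum_le_sum_of_subset_of_nonneg (Finset.range_subset_range.mpr h)
              (fun i _ _ => hbnn i)
        _ = S := Finset.sum_congr rfl fun j hj => hb_lt j (Finset.mem_range.mp hj)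
        _ ≤ 2 * S := by linarith
    · have hmN : m ≤ N := h.le
      rw [← Finset.sum_range_add_sum_Ico b hmN]
      have h1 : ∑ j ∈ Finset.range m, b j = S :=
        Finset.sum_congr rfl fun j hj => hb_lt j (Finset.mem_range.mp hj)
      have h2 : ∑ j ∈ Finset.Ico m N, b j ≤ S := by
        have h3 : ∑ j ∈ Finset.Ico m N, b j
            ≤ ∑ j ∈ Finset.Ico m N, ((a (j - m)) ^ 2 - (a j) ^ 2) :=
          Finset.sum_le_sum fun j hj => hb_ge j (Finset.mem_Ico.mp hj).1
        have h4 : ∑ j ∈ Finset.Ico m N, (a (j - m)) ^ 2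
            = ∑ i ∈ Finset.range (N - m), (a i) ^ 2 := by
          rw [Finset.sum_Ico_eq_sum_range]
          exact Finset.sum_congr rfl fun i _ => by simp
        have h5 : ∑ i ∈ Finset.range (N - m), (a i) ^ 2
            ≤ ∑ i ∈ Finset.range N, (a i) ^ 2 :=
          Finset.sum_le_sum_of_subset_of_nonneg
            (Finset.range_subset_range.mpr (Nat.sub_le N m)) (fun i _ _ => sq_nonneg _)
        have h6 : ∑ i ∈ Finset.range N, (a i) ^ 2
            = S + ∑ j ∈ Finset.Ico m N, (a j) ^ 2 := by
          rw [hS, Finset.sum_range_add_sum_Ico _ hmN]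
        rw [Finset.sum_sub_distrib, h4] at h3
        linarith
      linarith
  have hbsum : Summable b := summable_of_sum_range_le hbnn hpartial
  -- the shift
  set s : ℤ := if 0 ≤ k then n₀ else n₀ + k with hs
  have hzero : ∀ n : ℤ, n < s → c k n = 0 := by
    intro n hn
    have h1 : ¬ n₀ ≤ n := by
      rcases le_or_gt 0 k with h | h
      · simp only [hs, if_pos h] at hn; omega
      · simp only [hs, if_neg (not_le.mpr h)] at hn; omega
    have h2 : ¬ n₀ ≤ n - k := by
      rcases le_or_gt 0 k with h | h
      · simp only [hs, if_pos h] at hn; omega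
      · simp only [hs, if_neg (not_le.mpr h)] at hn; omega
    rw [hc, hF, hF, if_neg h1, if_neg h2, sub_self]
  have hkey : ∀ j : ℕ, (c k (s + j)) ^ 2 = b j := by
    intro j
    rw [hc, hF, hF]
    rcases le_or_gt 0 k with h | h
    · have hsn : s = n₀ := by simp [hs, h]
      have hmk : (m : ℤ) = k := by simp [hm, Int.natAbs_of_nonneg h]
      have h1 : n₀ ≤ s + j := by omega
      have ht1 : (s + j - n₀).toNat = j := by omega
      rw [if_pos h1, ht1]
      by_cases h2 : (m : ℕ) ≤ j
      · have h3 : n₀ ≤ s + j - k := by omega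
        have ht2 : (s + j - k - n₀).toNat = j - m := by omega
        rw [if_pos h3, ht2]
        simp only [hb, if_pos h2]
        ring
      · have h3 : ¬ n₀ ≤ s + j - k := by omega
        rw [if_neg h3]
        simp [hb, if_neg h2]
    · have hsn : s = n₀ + k := by simp [hs, not_le.mpr h]
      have hmk : (m : ℤ) = -k := by omega
      have h1 : n₀ ≤ s + j - k := by omega
      have ht1 : (s + j - k - n₀).toNat = j := by omega
      rw [if_pos h1, ht1]
      by_cases h2 : (m : ℕ) ≤ j
      · have h3 : n₀ ≤ s + j := by omega
        have ht2 : (s + j - n₀).toNat = j - m := by omega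
        rw [if_pos h3, ht2]
        simp only [hb, if_pos h2]
        ring
      · have h3 : ¬ n₀ ≤ s + j := by omega
        rw [if_neg h3]
        simp only [hb, if_neg h2]
        ring
  -- transfer via the injection j ↦ s + j
  set e : ℕ → ℤ := fun j => s + j with he
  have hinj : Function.Injective e := by
    intro i j hij
    simp only [he, add_right_inj, Nat.cast_inj] at hij
    exact hij
  have hoff : ∀ n : ℤ, n ∉ Set.range e → (c k n) ^ 2 = 0 := by
    intro n hn
    have : n < s := by
      by_contra hns
      push_neg at hns
      exact hn ⟨(n - s).toNat, by simp [he]; omega⟩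
    rw [hzero n this]; ring
  have hcomp : (fun n : ℤ => (c k n) ^ 2) ∘ e = b := by
    funext j
    simp only [Function.comp, he]
    exact hkey j
  have hHasSum : HasSum (fun n : ℤ => (c k n) ^ 2) (∑' j, b j) := by
    rw [← hinj.hasSum_iff hoff, hcomp]
    exact hbsum.hasSum
  have htsum : ∑' n : ℤ, (c k n) ^ 2 = ∑' j, b j := hHasSum.tsum_eq
  refine ⟨hHasSum.summable, ?_, ?_⟩
  · rw [htsum]
    calc S = ∑ j ∈ Finset.range m, b j :=
        (Finset.sum_congr rfl fun j hj => hb_lt j (Finset.mem_range.mp hj)).symm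
      _ ≤ ∑' j, b j := Summable.sum_le_tsum _ (fun i _ => hbnn i) hbsum
  · rw [htsum]
    exact Summable.tsum_le_of_sum_range_le hbsum hpartial
end

section
/- Let a : ℕ → ℝ be decreasing with a_n > 0, and define F : ℤ → ℝ by F(n) = a_n for n ≥ 0 and F(n) = 0 for n < 0, and c_k(n) = F(n) - F(n-k). Then for any fixed k ≥ 1 and any n₁ ≥ k, one has ∑_{n ≤ n₁} |c_k(n)|² ≤ 2 ∑_{n=0}^{k-1} a_n². -/
/-!
For `n ≥ k` we have `0 ≤ a n ≤ a (n - k)`, so `(a (n - k) - a n)² ≤ a (n - k)² - a n²`.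
Summing, the squares of the shifted sequence are dominated by those of `a` itself, and all that
survives is the head `n < k`, where `c_k(n) = a n`: once from `|c_k(n)|²` and once from the
telescoping.
-/

open Finset

theorem tsum_subtype_le_eq_sum_range {M : Type*} [AddCommMonoid M] [TopologicalSpace M]
    (f : ℤ → M) (hf : ∀ n < 0, f n = 0) (n₁ : ℤ) :
    ∑' n : {n : ℤ // n ≤ n₁}, f n = ∑ m ∈ range (n₁ + 1).toNat, f m := by
  refine (tsum_subtype {n : ℤ | n ≤ n₁} f).trans ?_
  rw [tsum_eq_sum (s := (range (n₁ + 1).toNat).map Nat.castEmbedding), sum_map]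
  · refine sum_congr rfl fun m hm => Set.indicator_of_mem ?_ f
    have := mem_range.mp hm
    change (m : ℤ) ≤ n₁
    omega
  · intro n hn
    by_cases hle : n ≤ n₁
    · have hneg : n < 0 := by
        by_contra! h
        exact hn (mem_map.mpr ⟨n.toNat, mem_range.mpr (by omega), by simp [h]⟩)
      simp [hneg, hf]
    · exact Set.indicator_of_notMem (s := {n : ℤ | n ≤ n₁}) hle f

theorem sq_sub_le_sq_sub_sq {R : Type*} [CommRing R] [LinearOrder R] [IsStrictOrderedRing R]
    {x y : R} (hy : 0 ≤ y) (hyx : y ≤ x) : (x - y) ^ 2 ≤ x ^ 2 - y ^ 2 := by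
  nlinarith

theorem sum_range_sq_shift_le (a : ℕ → ℝ) (K N : ℕ) :
    ∑ m ∈ range N, (if K ≤ m then a (m - K) else 0) ^ 2 ≤ ∑ m ∈ range N, a m ^ 2 := by
  have hlow : ∀ m ∈ range K, (if K ≤ m then a (m - K) else 0) ^ 2 = 0 := fun m hm => by
    simp [show ¬K ≤ m by simpa using hm]
  rcases le_or_gt N K with hNK | hKN
  · rw [sum_eq_zero fun m hm => hlow m (range_subset_range.mpr hNK hm)]
    positivity
  obtain ⟨L, rfl⟩ := Nat.exists_eq_add_of_le hKN.le
  calc ∑ m ∈ range (K + L), (if K ≤ m then a (m - K) else 0) ^ 2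
      = ∑ m ∈ range L, a m ^ 2 := by
        simp only [sum_range_add, sum_eq_zero hlow, zero_add, le_add_iff_nonneg_right, zero_le,
          if_true, add_tsub_cancel_left]
    _ ≤ ∑ m ∈ range (K + L), a m ^ 2 :=
        sum_le_sum_of_subset_of_nonneg (range_subset_range.mpr (by omega)) fun _ _ _ => by positivity

theorem sum_range_sq_sub_shift_le (a : ℕ → ℝ) (ha : Antitone a) (h0 : ∀ n, 0 ≤ a n) (K N : ℕ) :
    ∑ m ∈ range N, (a m - if K ≤ m then a (m - K) else 0) ^ 2 ≤ 2 * ∑ m ∈ range K, a m ^ 2 := by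
  set s : ℕ → ℝ := fun m => if K ≤ m then a (m - K) else 0
  have hpoint : ∀ m, (a m - s m) ^ 2 ≤ s m ^ 2 - a m ^ 2 + 2 * (if m < K then a m ^ 2 else 0) := by
    intro m
    by_cases hm : K ≤ m
    · simp only [s, hm, if_true, not_lt.mpr hm, if_false, mul_zero, add_zero]
      rw [sub_sq_comm]
      exact sq_sub_le_sq_sub_sq (h0 m) (ha (Nat.sub_le m K))
    · simp only [s, hm, if_false, not_le.mp hm, if_true]
      exact le_of_eq (by ring)
  have hhead : ∑ m ∈ range N, (if m < K then a m ^ 2 else 0) ≤ ∑ m ∈ range K, a m ^ 2 := by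
    rw [← sum_filter]
    refine sum_le_sum_of_subset_of_nonneg (fun m hm => ?_) fun _ _ _ => by positivity
    simpa using (mem_filter.mp hm).2
  calc ∑ m ∈ range N, (a m - s m) ^ 2
      ≤ ∑ m ∈ range N, (s m ^ 2 - a m ^ 2 + 2 * (if m < K then a m ^ 2 else 0)) :=
        sum_le_sum fun m _ => hpoint m
    _ = (∑ m ∈ range N, s m ^ 2 - ∑ m ∈ range N, a m ^ 2)
          + 2 * ∑ m ∈ range N, (if m < K then a m ^ 2 else 0) := by
        rw [sum_add_distrib, sum_sub_distrib, mul_sum]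
    _ ≤ 2 * ∑ m ∈ range K, a m ^ 2 := by
        linarith [sum_range_sq_shift_le a K N]

theorem stmt7_general (a : ℕ → ℝ) (ha : Antitone a) (hpos : ∀ n, 0 < a n)
    (F : ℤ → ℝ) (hF : ∀ n : ℤ, F n = if 0 ≤ n then a n.toNat else 0)
    (c : ℤ → ℤ → ℝ) (hc : ∀ k n, c k n = F n - F (n - k))
    (k : ℤ) (hk : 1 ≤ k) (n₁ : ℤ) :
    ∑' n : {n : ℤ // n ≤ n₁}, |c k n| ^ 2 ≤ 2 * ∑ n ∈ Finset.range k.toNat, (a n) ^ 2 := by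
  obtain ⟨K, rfl⟩ := Int.eq_ofNat_of_zero_le (by omega : 0 ≤ k)
  have hc_neg : ∀ n < 0, |c K n| ^ 2 = 0 := fun n hn => by
    rw [hc, hF, hF, if_neg (by omega), if_neg (by omega)]
    simp
  have hc_nat : ∀ m : ℕ, |c K m| ^ 2 = (a m - if K ≤ m then a (m - K) else 0) ^ 2 := by
    intro m
    by_cases hm : K ≤ m
    · rw [hc, hF, hF, if_pos (by omega), if_pos (by omega), if_pos hm, ← Nat.cast_sub hm,
        Int.toNat_natCast, Int.toNat_natCast, sq_abs]
    · rw [hc, hF, hF, if_pos (by omega), if_neg (by omega), if_neg hm, Int.toNat_natCast, sq_abs]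
  rw [tsum_subtype_le_eq_sum_range _ hc_neg, Int.toNat_natCast]
  simp only [hc_nat]
  exact sum_range_sq_sub_shift_le a ha (fun n => (hpos n).le) K _

theorem stmt7 (a : ℕ → ℝ) (ha : Antitone a) (hpos : ∀ n, 0 < a n)
    (F : ℤ → ℝ) (hF : ∀ n : ℤ, F n = if 0 ≤ n then a n.toNat else 0)
    (c : ℤ → ℤ → ℝ) (hc : ∀ k n, c k n = F n - F (n - k))
    (k : ℤ) (hk : 1 ≤ k) (n₁ : ℤ) (hn₁ : k ≤ n₁) :
    ∑' n : {n : ℤ // n ≤ n₁}, |c k n| ^ 2 ≤ 2 * ∑ n ∈ Finset.range k.toNat, (a n) ^ 2 :=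
  stmt7_general a ha hpos F hF c hc k hk n₁
end

section
/- Define F₀ : ℤ → ℝ by F₀(n) = 1/(√(n log n)) for n ≥ 4 and F₀(n) = 0 for n ≤ 3, and for k ∈ ℤ set c_k(n) = F₀(n) - F₀(n-k). Then c_k ∈ ℓ²(ℤ) for every k ∈ ℤ, and ‖c_k‖₂² / log|k| → 0 as |k| → ∞. -/
/-!
Telescoping: if `a ≥ b ≥ 0` then `(a - b)² ≤ a² - b²`, and `F₀` is nonnegative and
nonincreasing on `[4, ∞)`. Summing `F₀(n - k)² - F₀(n)²` over `n ≥ k + 4` leaves at most the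
window `∑_{n=4}^{k+3} F₀(n)²`, and on that window `c_k(n) = F₀(n)`. Hence
`‖c_k‖₂² ≤ 2 ∑_{n=4}^{k+3} 1/(n log n) ≤ 2 (log log (k + 3) - log log 3) = o(log k)`.
-/

open Real Finset Filter Topology

section Shift

variable {g : ℕ → ℝ}

theorem sum_range_sq_sub_shift_le_s8 (hg0 : ∀ i, 0 ≤ g i) (hg : Antitone g) (k M : ℕ) :
    ∑ i ∈ range M, (g (i + k) - g i) ^ 2 ≤ ∑ i ∈ range k, g i ^ 2 := by
  have hsq : ∀ i, (g (i + k) - g i) ^ 2 ≤ g i ^ 2 - g (i + k) ^ 2 := fun i => by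
    nlinarith [hg0 (i + k), hg (Nat.le_add_right i k)]
  have hwindow : ∑ i ∈ range M, g i ^ 2 ≤ ∑ i ∈ range k, g i ^ 2 + ∑ i ∈ range M, g (k + i) ^ 2 :=
    calc ∑ i ∈ range M, g i ^ 2 ≤ ∑ i ∈ range (k + M), g i ^ 2 :=
          sum_le_sum_of_subset_of_nonneg (range_subset_range.2 (Nat.le_add_left M k))
            fun _ _ _ => sq_nonneg _
      _ = _ := sum_range_add _ k M
  calc ∑ i ∈ range M, (g (i + k) - g i) ^ 2 ≤ ∑ i ∈ range M, (g i ^ 2 - g (i + k) ^ 2) :=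
        sum_le_sum fun i _ => hsq i
    _ ≤ ∑ i ∈ range k, g i ^ 2 := by
        simp only [sum_sub_distrib, add_comm _ k]
        linarith

theorem summable_sq_sub_shift (hg0 : ∀ i, 0 ≤ g i) (hg : Antitone g) (k : ℕ) :
    Summable fun i => (g (i + k) - g i) ^ 2 :=
  summable_of_sum_range_le (fun _ => sq_nonneg _) (sum_range_sq_sub_shift_le_s8 hg0 hg k)

theorem tsum_sq_sub_shift_le (hg0 : ∀ i, 0 ≤ g i) (hg : Antitone g) (k : ℕ) :
    ∑' i, (g (i + k) - g i) ^ 2 ≤ ∑ i ∈ range k, g i ^ 2 :=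
  tsum_le_of_sum_range_le (fun _ => sq_nonneg _) (sum_range_sq_sub_shift_le_s8 hg0 hg k)

end Shift

section IntShift

variable {F : ℤ → ℝ} {N : ℤ}

theorem Int.summable_sq_sub_shift_and_tsum_le (hzero : ∀ n < N, F n = 0) (hF0 : ∀ n, 0 ≤ F n)
    (hF : AntitoneOn F (Set.Ici N)) (k : ℕ) :
    Summable (fun n => (F n - F (n - k)) ^ 2) ∧
      ∑' n, (F n - F (n - k)) ^ 2 ≤ 2 * ∑ i ∈ Finset.range k, F (N + i) ^ 2 := by
  set f : ℤ → ℝ := fun n => (F n - F (n - k)) ^ 2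
  set g : ℕ → ℝ := fun i => F (N + i)
  have hinj : Function.Injective fun i : ℕ => N + i := fun i j h => by simpa using h
  have hsupp : Function.support f ⊆ Set.range fun i : ℕ => N + i := fun n hn => by
    by_cases hnN : n < N
    · exact absurd (by simp [f, hzero n hnN, hzero (n - k) (by omega)]) hn
    · exact ⟨(n - N).toNat, by simp only; omega⟩
  have hg : Antitone g := fun i j hij => hF (by simp) (by simp) (by simp [hij])
  have hhead : ∀ i < k, f (N + i) = g i ^ 2 := fun i hi => by
    simp only [f, g, hzero (N + i - k) (by omega), sub_zero]
  have htail : (fun i : ℕ => f (N + ↑(i + k))) = fun i => (g (i + k) - g i) ^ 2 := by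
    ext i
    simp only [f, g]
    congr 3
    push_cast
    ring
  have hsummable : Summable fun i : ℕ => f (N + i) :=
    (summable_nat_add_iff k).1 (htail ▸ summable_sq_sub_shift (fun i => hF0 _) hg k)
  refine ⟨(hinj.summable_iff fun n hn => Function.notMem_support.1 (hn ∘ (hsupp ·))).1
    hsummable, ?_⟩
  rw [← hinj.tsum_eq hsupp, ← hsummable.sum_add_tsum_nat_add k, htail,
    sum_congr rfl fun i hi => hhead i (mem_range.1 hi)]
  linarith [tsum_sq_sub_shift_le (fun i => hF0 _) hg k]

theorem sq_sub_shift_neg (F : ℤ → ℝ) (k : ℤ) :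
    (fun n => (F n - F (n - -k)) ^ 2) = (fun n => (F n - F (n - k)) ^ 2) ∘ Equiv.addRight k := by
  ext n
  simp only [Function.comp, Equiv.coe_addRight, sub_neg_eq_add, add_sub_cancel_right]
  ring

end IntShift

section LogLog

theorem one_div_mul_log_le_log_log_sub {m : ℝ} (hm : 1 < m) :
    1 / ((m + 1) * log (m + 1)) ≤ log (log (m + 1)) - log (log m) := by
  have hlogm : 0 < log m := log_pos hm
  have hlogm1 : 0 < log (m + 1) := log_pos (by linarith)
  have hstep : 1 / (m + 1) ≤ log (m + 1) - log m := by
    have := one_sub_inv_le_log_of_pos (x := (m + 1) / m) (by positivity)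
    rw [log_div (by positivity) (by positivity), inv_div] at this
    calc 1 / (m + 1) = 1 - m / (m + 1) := by field_simp; ring
      _ ≤ _ := this
  have hloglog := one_sub_inv_le_log_of_pos (div_pos hlogm1 hlogm)
  rw [log_div hlogm1.ne' hlogm.ne', inv_div] at hloglog
  calc 1 / ((m + 1) * log (m + 1)) = 1 / (m + 1) / log (m + 1) := by rw [div_div]
    _ ≤ (log (m + 1) - log m) / log (m + 1) := by gcongr
    _ = 1 - log m / log (m + 1) := by rw [sub_div, div_self hlogm1.ne']
    _ ≤ _ := hloglog

theorem sum_range_one_div_mul_log_le {a : ℝ} (ha : 1 < a) (k : ℕ) :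
    ∑ i ∈ range k, 1 / ((a + i + 1) * log (a + i + 1)) ≤ log (log (a + k)) - log (log a) := by
  have := sum_range_sub (fun i : ℕ => log (log (a + i))) k
  simp only [Nat.cast_add, Nat.cast_one, CharP.cast_eq_zero, add_zero, ← add_assoc] at this
  rw [← this]
  exact sum_le_sum fun i _ => one_div_mul_log_le_log_log_sub (by linarith [i.cast_nonneg (α := ℝ)])

theorem log_log_add_le {a x : ℝ} (ha : 0 ≤ a) (hax : a ≤ x) (hx : 2 ≤ x) :
    log (log (a + x)) ≤ log 2 + log (log x) := by
  have hlogx : 0 < log x := log_pos (by linarith)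
  have hlog : log (a + x) ≤ 2 * log x := by
    rw [← log_rpow (by linarith)]
    exact log_le_log (by linarith) (by norm_num; nlinarith)
  rw [← log_mul (by norm_num) hlogx.ne']
  exact log_le_log (log_pos (by linarith)) hlog

theorem tendsto_const_add_mul_log_log_div_log (C D : ℝ) :
    Tendsto (fun x => (C + D * log (log x)) / log x) atTop (𝓝 0) := by
  have hlog : Tendsto (fun y => log y / y) atTop (𝓝 0) :=
    isLittleO_log_id_atTop.tendsto_div_nhds_zero
  have hy : Tendsto (fun y => (C + D * log y) / y) atTop (𝓝 0) := by
    simpa [add_div, mul_div_assoc] using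
      (tendsto_const_nhds.div_atTop tendsto_id).add (hlog.const_mul D)
  exact hy.comp tendsto_log_atTop

end LogLog

noncomputable def F₀ (n : ℤ) : ℝ := if 4 ≤ n then 1 / √((n : ℝ) * log n) else 0

theorem F₀_nonneg (n : ℤ) : 0 ≤ F₀ n := by
  unfold F₀
  split_ifs <;> positivity

theorem F₀_of_lt {n : ℤ} (hn : n < 4) : F₀ n = 0 := if_neg (by omega)

theorem F₀_sq {n : ℤ} (hn : 4 ≤ n) : F₀ n ^ 2 = 1 / (n * log n) := by
  have hn' : (4 : ℝ) ≤ n := by exact_mod_cast hn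
  have hlog : 0 < log n := log_pos (by linarith)
  rw [F₀, if_pos hn, div_pow, one_pow, sq_sqrt (by positivity)]

theorem antitoneOn_F₀ : AntitoneOn F₀ (Set.Ici 4) := fun m hm n hn hmn => by
  have hm' : (4 : ℝ) ≤ m := by exact_mod_cast hm
  have hmn' : (m : ℝ) ≤ n := by exact_mod_cast hmn
  have hlog : 0 < log m := log_pos (by linarith)
  rw [F₀, F₀, if_pos (Set.mem_Ici.1 hn), if_pos (Set.mem_Ici.1 hm)]
  gcongr
  linarith

theorem F₀_summable_and_tsum_le (m : ℕ) :
    Summable (fun n => (F₀ n - F₀ (n - m)) ^ 2) ∧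
      ∑' n, (F₀ n - F₀ (n - m)) ^ 2 ≤ 2 * (log (log (3 + m)) - log (log 3)) := by
  obtain ⟨hsum, hle⟩ := Int.summable_sq_sub_shift_and_tsum_le (N := 4) (fun _ => F₀_of_lt)
    F₀_nonneg antitoneOn_F₀ m
  have hwindow : ∑ i ∈ range m, F₀ (4 + i) ^ 2 =
      ∑ i ∈ range m, 1 / ((3 + i + 1) * log (3 + i + 1)) :=
    sum_congr rfl fun i _ => by
      rw [F₀_sq (by omega)]
      push_cast
      ring_nf
  refine ⟨hsum, hle.trans ?_⟩
  linarith [sum_range_one_div_mul_log_le (a := 3) (by norm_num) m]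

theorem F₀_summable_and_tsum_le_abs (k : ℤ) :
    Summable (fun n => (F₀ n - F₀ (n - k)) ^ 2) ∧
      ∑' n, (F₀ n - F₀ (n - k)) ^ 2 ≤ 2 * (log (log (3 + |(k : ℝ)|)) - log (log 3)) := by
  obtain ⟨m, rfl | rfl⟩ := Int.eq_nat_or_neg k
  · simpa using F₀_summable_and_tsum_le m
  · obtain ⟨hsum, hle⟩ := F₀_summable_and_tsum_le m
    rw [sq_sub_shift_neg, (Equiv.addRight _).summable_iff]
    simp only [Int.cast_neg, Int.cast_natCast, abs_neg, Nat.abs_cast]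
    exact ⟨hsum, (Equiv.tsum_eq _ _).trans_le hle⟩

theorem stmt8 (F : ℤ → ℝ)
    (hF : ∀ n : ℤ, F n = if 4 ≤ n then 1 / Real.sqrt ((n : ℝ) * Real.log (n : ℝ)) else 0)
    (c : ℤ → ℤ → ℝ) (hc : ∀ k n, c k n = F n - F (n - k)) :
    (∀ k : ℤ, Summable (fun n : ℤ => (c k n) ^ 2)) ∧
      Filter.Tendsto (fun k : ℤ => (∑' n : ℤ, (c k n) ^ 2) / Real.log |(k : ℝ)|)
        Filter.cofinite (nhds 0) := by
  obtain rfl : F = F₀ := funext hF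
  simp only [hc]
  refine ⟨fun k => (F₀_summable_and_tsum_le_abs k).1, ?_⟩
  have habs : Tendsto (fun k : ℤ => |(k : ℝ)|) cofinite atTop :=
    tendsto_norm_cocompact_atTop.comp Int.tendsto_coe_cofinite
  have hlarge : ∀ᶠ k : ℤ in cofinite, 3 ≤ |(k : ℝ)| := habs.eventually_ge_atTop 3
  refine squeeze_zero' ?_ ?_
    ((tendsto_const_add_mul_log_log_div_log (2 * (log 2 - log (log 3))) 2).comp habs)
  · filter_upwards [hlarge] with k hk
    exact div_nonneg (tsum_nonneg fun _ => sq_nonneg _) (log_nonneg (by linarith))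
  · filter_upwards [hlarge] with k hk
    have hlog : 0 < log |(k : ℝ)| := log_pos (by linarith)
    refine div_le_div_of_nonneg_right ?_ hlog.le
    linarith [(F₀_summable_and_tsum_le_abs k).2, log_log_add_le (by norm_num) hk (by linarith)]
end

section
/- Define μ : ℤ → ℝ by μ(n) = 1/2 + 1/(6√n) for n ≥ 1 and μ(n) = 1/2 for n ≤ 0, and c_k(n) = μ(n) - μ(n-k). Then for every k ∈ ℤ with |k| ≥ 2, one has (1/36) log(1 + |k|) ≤ ‖c_k‖₂² ≤ (1/18)(1 + log|k|). -/
/-!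
Write `μ = 1/2 + g` with `g n = 1/(6√n)` for `n ≥ 1` and `g n = 0` otherwise, so that
`c_k(n) = g n - g (n - k)`; the sum only depends on `N = |k|`. For `n ≤ N` the term is `g n ^ 2`,
and these contribute `H_N / 36`. For `n > N`, since `0 ≤ g n ≤ g (n - N)`,
`(g (n - N) - g n)^2 ≤ g (n - N)^2 - g n ^2`, which telescopes to at most another `H_N / 36`.
The bounds `log (N + 1) ≤ H_N ≤ 1 + log N` finish the proof.
-/

open Finset

lemma sum_range_sub_add_le (a : ℕ → ℝ) (ha : ∀ j, 0 ≤ a j) (N L : ℕ) :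
    ∑ j ∈ range L, (a j - a (N + j)) ≤ ∑ j ∈ range N, a j := by
  have hsplit := sum_range_add a N L
  have hmono : ∑ j ∈ range L, a j ≤ ∑ j ∈ range (N + L), a j :=
    sum_le_sum_of_subset_of_nonneg (range_subset_range.2 (by omega)) fun j _ _ => ha j
  rw [sum_sub_distrib]
  linarith

lemma sub_sq_le_sq_sub_sq {x y : ℝ} (hy : 0 ≤ y) (hyx : y ≤ x) : (x - y) ^ 2 ≤ x ^ 2 - y ^ 2 := by
  nlinarith

lemma tsum_sq_sub_comp_sub_natAbs (f : ℤ → ℝ) (k : ℤ) :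
    ∑' n, (f n - f (n - k)) ^ 2 = ∑' n, (f n - f (n - k.natAbs)) ^ 2 := by
  obtain ⟨N, rfl | rfl⟩ := Int.eq_nat_or_neg k
  · rfl
  · rw [Int.natAbs_neg, Int.natAbs_natCast,
      ← (Equiv.addRight (N : ℤ)).tsum_eq fun n => (f n - f (n - N)) ^ 2]
    congr 1 with n
    simp only [Equiv.coe_addRight, add_sub_cancel_right, sub_neg_eq_add]
    ring

lemma tsum_int_eq_tsum_nat_add_one {f : ℤ → ℝ} (hf : ∀ n ≤ 0, f n = 0) :
    ∑' n, f n = ∑' m : ℕ, f (m + 1) := by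
  refine (Function.Injective.tsum_eq (fun a b h => by simpa using h) fun n hn => ?_).symm
  exact ⟨(n - 1).toNat, by
    have : 0 < n := by by_contra! h; exact hn (hf n h)
    simp only; omega⟩

section ShiftedDifference

variable {g : ℤ → ℝ}

lemma sum_range_sq_sub_comp_sub_le (hg : ∀ n ≤ 0, g n = 0) (hg0 : 0 ≤ g)
    (hanti : Antitone fun m : ℕ => g (m + 1)) (N M : ℕ) :
    ∑ m ∈ range M, (g (m + 1) - g (m + 1 - N)) ^ 2 ≤ 2 * ∑ m ∈ range N, g (m + 1) ^ 2 := by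
  have hshift (j : ℕ) : ((N + j : ℕ) : ℤ) + 1 - N = (j : ℕ) + 1 := by push_cast; ring
  calc ∑ m ∈ range M, (g (m + 1) - g (m + 1 - N)) ^ 2
      ≤ ∑ m ∈ range (N + M), (g (m + 1) - g (m + 1 - N)) ^ 2 :=
        sum_le_sum_of_subset_of_nonneg (range_subset_range.2 (by omega)) fun _ _ _ => sq_nonneg _
    _ = ∑ m ∈ range N, g (m + 1) ^ 2 + ∑ j ∈ range M, (g (j + 1) - g ((N + j : ℕ) + 1)) ^ 2 := by
        rw [sum_range_add]
        congr 1
        · refine sum_congr rfl fun m hm => ?_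
          rw [hg (m + 1 - N) (by simp only [mem_range] at hm; omega), sub_zero]
        · refine sum_congr rfl fun j _ => ?_
          rw [hshift, ← neg_sub, neg_sq]
    _ ≤ ∑ m ∈ range N, g (m + 1) ^ 2
          + ∑ j ∈ range M, (g (j + 1) ^ 2 - g ((N + j : ℕ) + 1) ^ 2) := by
        gcongr with j
        exact sub_sq_le_sq_sub_sq (hg0 _) (hanti (by omega))
    _ ≤ 2 * ∑ m ∈ range N, g (m + 1) ^ 2 := by
        linarith [sum_range_sub_add_le (fun j => g (j + 1) ^ 2) (fun j => sq_nonneg _) N M]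

lemma tsum_sq_sub_comp_sub_eq_tsum_nat (hg : ∀ n ≤ 0, g n = 0) (N : ℕ) :
    ∑' n, (g n - g (n - N)) ^ 2 = ∑' m : ℕ, (g (m + 1) - g (m + 1 - N)) ^ 2 :=
  tsum_int_eq_tsum_nat_add_one fun n hn => by rw [hg n hn, hg _ (by omega)]; ring

lemma sum_range_sq_le_tsum_sq_sub_comp_sub (hg : ∀ n ≤ 0, g n = 0) (hg0 : 0 ≤ g)
    (hanti : Antitone fun m : ℕ => g (m + 1)) (N : ℕ) :
    ∑ m ∈ range N, g (m + 1) ^ 2 ≤ ∑' n, (g n - g (n - N)) ^ 2 := by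
  rw [tsum_sq_sub_comp_sub_eq_tsum_nat hg]
  calc ∑ m ∈ range N, g (m + 1) ^ 2
      = ∑ m ∈ range N, (g (m + 1) - g (m + 1 - N)) ^ 2 := by
        refine sum_congr rfl fun m hm => ?_
        rw [hg (m + 1 - N) (by simp only [mem_range] at hm; omega), sub_zero]
    _ ≤ _ := (summable_of_sum_range_le (fun _ => sq_nonneg _)
        (sum_range_sq_sub_comp_sub_le hg hg0 hanti N)).sum_le_tsum _ fun _ _ => sq_nonneg _

lemma tsum_sq_sub_comp_sub_le (hg : ∀ n ≤ 0, g n = 0) (hg0 : 0 ≤ g)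
    (hanti : Antitone fun m : ℕ => g (m + 1)) (N : ℕ) :
    ∑' n, (g n - g (n - N)) ^ 2 ≤ 2 * ∑ m ∈ range N, g (m + 1) ^ 2 := by
  rw [tsum_sq_sub_comp_sub_eq_tsum_nat hg]
  exact Real.tsum_le_of_sum_range_le (fun _ => sq_nonneg _)
    (sum_range_sq_sub_comp_sub_le hg hg0 hanti N)

end ShiftedDifference

noncomputable def decay (n : ℤ) : ℝ := if 1 ≤ n then 1 / (6 * √n) else 0

lemma decay_of_nonpos {n : ℤ} (hn : n ≤ 0) : decay n = 0 := if_neg (by omega)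

lemma decay_nonneg : 0 ≤ decay := fun n => by unfold decay; split_ifs <;> positivity

lemma decay_natCast_add_one (m : ℕ) : decay (m + 1) = 1 / (6 * √(m + 1)) := by
  rw [decay, if_pos (by omega)]
  push_cast
  rfl

lemma antitone_decay_natCast_add_one : Antitone fun m : ℕ => decay (m + 1) := by
  intro a b hab
  simp only [decay_natCast_add_one]
  gcongr

lemma sum_range_decay_sq (N : ℕ) : ∑ m ∈ range N, decay (m + 1) ^ 2 = harmonic N / 36 := by
  simp only [harmonic, Rat.cast_sum, Rat.cast_inv, Rat.cast_natCast, sum_div]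
  refine sum_congr rfl fun m _ => ?_
  rw [decay_natCast_add_one, div_pow, mul_pow, Real.sq_sqrt (by positivity)]
  field_simp
  push_cast
  ring

theorem stmt9_general (μ : ℤ → ℝ)
    (hμ : ∀ n : ℤ, μ n = if 1 ≤ n then 1 / 2 + 1 / (6 * Real.sqrt (n : ℝ)) else 1 / 2)
    (c : ℤ → ℤ → ℝ) (hc : ∀ k n, c k n = μ n - μ (n - k))
    (k : ℤ) :
    (1 / 36) * Real.log (1 + |(k : ℝ)|) ≤ ∑' n : ℤ, (c k n) ^ 2 ∧
      ∑' n : ℤ, (c k n) ^ 2 ≤ (1 / 18) * (1 + Real.log |(k : ℝ)|) := by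
  have hck (n : ℤ) : c k n = decay n - decay (n - k) := by
    simp only [hc, hμ, decay]
    split_ifs <;> ring
  simp only [hck]
  rw [tsum_sq_sub_comp_sub_natAbs, ← Int.cast_abs, Int.abs_eq_natAbs, Int.cast_natCast]
  have hlower := sum_range_sq_le_tsum_sq_sub_comp_sub (fun _ => decay_of_nonpos) decay_nonneg
    antitone_decay_natCast_add_one k.natAbs
  have hupper := tsum_sq_sub_comp_sub_le (fun _ => decay_of_nonpos) decay_nonneg
    antitone_decay_natCast_add_one k.natAbs
  rw [sum_range_decay_sq] at hlower hupper
  have hlog := log_add_one_le_harmonic k.natAbs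
  have hharm := harmonic_le_one_add_log k.natAbs
  push_cast at hlog
  rw [add_comm] at hlog
  constructor <;> linarith

theorem stmt9 (μ : ℤ → ℝ)
    (hμ : ∀ n : ℤ, μ n = if 1 ≤ n then 1 / 2 + 1 / (6 * Real.sqrt (n : ℝ)) else 1 / 2)
    (c : ℤ → ℤ → ℝ) (hc : ∀ k n, c k n = μ n - μ (n - k))
    (k : ℤ) (hk : 2 ≤ |k|) :
    (1 / 36) * Real.log (1 + |(k : ℝ)|) ≤ ∑' n : ℤ, (c k n) ^ 2 ∧
      ∑' n : ℤ, (c k n) ^ 2 ≤ (1 / 18) * (1 + Real.log |(k : ℝ)|) :=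
  stmt9_general μ hμ c hc k
end

section
/- For every D > 0 there exists a function H : ℤ → [0,1] with H(n) = 0 for all n ≤ 0 such that, defining c_k(n) = H(n) - H(n-k), each c_k belongs to ℓ²(ℤ) and ‖c_k‖₂² ≥ D |k|^{3/2} for all k ∈ ℤ. -/
/-!
Take for `H` a triangle wave whose slope decreases from block to block: on
`[2b·8^m, 2b·8^(m+1))` it has half-period `4^m`, hence slope `4^-m`. Given `k`, choose `m` with
`4^m ≍ k`; each of the first `b 2^m` teeth of block `m` contains `≍ 4^m` points `n` with
`n - k` on the same rising edge, where `|H n - H (n - k)| = k / 4^m`, so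
`‖c_k‖² ≳ b 2^m · 4^m · (k / 4^m)² ≍ b k^(3/2)`. On the other hand
`c_1(n)² ≤ 16^-m ≲ b^(4/3) n^(-4/3)` is summable, and `c_k` is a sum of `k` translates of `c_1`.
-/

noncomputable def triangleWave (L : ℕ) (j : ℤ) : ℝ :=
  (min (j % (2 * L)) (2 * L - j % (2 * L)) : ℤ) / L

namespace triangleWave

variable {L : ℕ}

lemma mem_Icc (hL : 0 < L) (j : ℤ) : triangleWave L j ∈ Set.Icc (0 : ℝ) 1 := by
  have hr0 : 0 ≤ j % (2 * L) := Int.emod_nonneg j (by omega)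
  have hr1 : j % (2 * L) < 2 * L := Int.emod_lt_of_pos j (by omega)
  have hL' : (0 : ℝ) < L := by exact_mod_cast hL
  rw [triangleWave, Set.mem_Icc, le_div_iff₀ hL', div_le_iff₀ hL', zero_mul, one_mul]
  constructor <;> norm_cast <;> push_cast <;> omega

lemma mul_add (hL : 0 < L) (q : ℤ) {i : ℤ} (hi0 : 0 ≤ i) (hiL : i ≤ L) :
    triangleWave L (2 * L * q + i) = i / L := by
  have hmod : (2 * L * q + i) % (2 * L) = i := by
    rw [Int.mul_add_emod_self_left, Int.emod_eq_of_lt hi0 (by omega)]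
  rw [triangleWave, hmod, min_eq_left (by omega)]

lemma abs_sub_pred_le (hL : 0 < L) (j : ℤ) :
    |triangleWave L j - triangleWave L (j - 1)| ≤ (L : ℝ)⁻¹ := by
  set r := (j - 1) % (2 * L) with hr
  have hr0 : 0 ≤ r := Int.emod_nonneg _ (by omega)
  have hr1 : r < 2 * L := Int.emod_lt_of_pos _ (by omega)
  have hj : j % (2 * L) = (r + 1) % (2 * L) := by
    rw [hr, Int.emod_add_emod, sub_add_cancel]
  have hstep : |min (j % (2 * L)) (2 * L - j % (2 * L)) - min r (2 * L - r)| ≤ 1 := by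
    rcases (show r + 1 < 2 * L ∨ r + 1 = 2 * L by omega) with h | h
    · rw [hj, Int.emod_eq_of_lt (by omega) h, abs_le]; omega
    · rw [hj, h, Int.emod_self, abs_le]; omega
  have hL' : (0 : ℝ) < L := by exact_mod_cast hL
  rw [triangleWave, triangleWave, ← hr, ← sub_div, abs_div, abs_of_pos hL', div_le_iff₀ hL',
    inv_mul_cancel₀ hL'.ne']
  exact_mod_cast hstep

lemma apply_zero (L : ℕ) : triangleWave L 0 = 0 := by
  simp [triangleWave]

end triangleWave

lemma summable_sq_sub_of_summable_sq_sub_one {f : ℤ → ℝ}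
    (h : Summable fun n => (f n - f (n - 1)) ^ 2) (k : ℕ) :
    Summable fun n => (f n - f (n - k)) ^ 2 := by
  induction k with
  | zero => simp
  | succ k ih =>
    have hshift : Summable fun n => (f (n - k) - f (n - k - 1)) ^ 2 :=
      (Equiv.subRight (k : ℤ)).summable_iff.mpr h
    refine Summable.of_nonneg_of_le (fun _ => sq_nonneg _) (fun n => ?_)
      ((ih.add hshift).mul_left 2)
    have hsplit : f n - f (n - ↑(k + 1)) = (f n - f (n - k)) + (f (n - k) - f (n - k - 1)) := by
      push_cast; ring_nf
    rw [hsplit]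
    exact add_sq_le

lemma sq_sub_neg_shift (f : ℤ → ℝ) (k : ℤ) :
    (fun n => (f n - f (n - -k)) ^ 2) = (fun n => (f n - f (n - k)) ^ 2) ∘ Equiv.addRight k := by
  ext n
  simp only [Function.comp_apply, Equiv.coe_addRight, sub_neg_eq_add, add_sub_cancel_right]
  ring

lemma forall_int_of_forall_nat {f : ℤ → ℝ} {D p : ℝ}
    (h : ∀ k : ℕ, Summable (fun n => (f n - f (n - k)) ^ 2) ∧
      D * (k : ℝ) ^ p ≤ ∑' n, (f n - f (n - k)) ^ 2) (k : ℤ) :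
    Summable (fun n => (f n - f (n - k)) ^ 2) ∧
      D * |(k : ℝ)| ^ p ≤ ∑' n, (f n - f (n - k)) ^ 2 := by
  obtain ⟨j, rfl | rfl⟩ := Int.eq_nat_or_neg k
  · simpa using h j
  · rw [sq_sub_neg_shift, (Equiv.addRight _).summable_iff, Function.comp_def,
      (Equiv.addRight _).tsum_eq (fun n => (f n - f (n - j)) ^ 2)]
    simpa using h j

lemma inv_four_pow_sq_le_rpow {c y : ℝ} (hc : 0 < c) (hy : 0 < y) {m : ℕ} (h : y ≤ c * 8 ^ m) :
    ((4 : ℝ) ^ m)⁻¹ ^ 2 ≤ c ^ (4 / 3 : ℝ) * y ^ (-(4 / 3) : ℝ) := by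
  have h4 : (4 : ℝ) ^ m = ((2 : ℝ) ^ m) ^ 2 := by rw [← pow_mul, mul_comm, pow_mul]; norm_num
  have h8 : ((8 : ℝ) ^ m) ^ (-(4 / 3) : ℝ) = ((4 : ℝ) ^ m)⁻¹ ^ 2 := by
    rw [show (8 : ℝ) ^ m = ((2 : ℝ) ^ m) ^ 3 by rw [← pow_mul, mul_comm, pow_mul]; norm_num,
      ← Real.rpow_natCast_mul (by positivity), show ((3 : ℕ) : ℝ) * (-(4 / 3)) = -(4 : ℕ) by
      norm_num, Real.rpow_neg (by positivity), Real.rpow_natCast, h4]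
    ring
  calc ((4 : ℝ) ^ m)⁻¹ ^ 2
      = c ^ (4 / 3 : ℝ) * (c * 8 ^ m) ^ (-(4 / 3) : ℝ) := by
        rw [Real.mul_rpow hc.le (by positivity), h8, Real.rpow_neg hc.le, mul_inv_cancel_left₀
          (by positivity)]
    _ ≤ c ^ (4 / 3 : ℝ) * y ^ (-(4 / 3) : ℝ) :=
        mul_le_mul_of_nonneg_left (Real.rpow_le_rpow_of_nonpos hy h (by norm_num)) (by positivity)

lemma exists_four_pow_mem_Icc {k : ℕ} (hk : 0 < k) : ∃ m, 2 * k ≤ 4 ^ m ∧ 4 ^ m ≤ 8 * k := by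
  refine ⟨Nat.log 4 (2 * k) + 1, (Nat.lt_pow_succ_log_self (by norm_num) _).le, ?_⟩
  have := Nat.pow_log_le_self 4 (show 2 * k ≠ 0 by omega)
  rw [pow_succ]; omega

lemma mul_rpow_three_halves_le {D b k : ℝ} (hD : 0 ≤ D) (hb : 6 * D ≤ b) (hk : 0 < k) {m : ℕ}
    (h₁ : 2 * k ≤ 4 ^ m) (h₂ : 4 ^ m ≤ 8 * k) :
    D * k ^ (3 / 2 : ℝ) ≤ b * 2 ^ m * (4 ^ m + 1 - k) * (k / 4 ^ m) ^ 2 := by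
  set u : ℝ := 2 ^ m
  have hu : 0 < u := by positivity
  have h4 : (4 : ℝ) ^ m = u ^ 2 := by rw [← pow_mul, mul_comm, pow_mul]; norm_num
  set s := √k
  have hs : 0 < s := Real.sqrt_pos.2 hk
  have hks : k = s ^ 2 := (Real.sq_sqrt hk.le).symm
  have hpow : k ^ (3 / 2 : ℝ) = s ^ 3 := by
    rw [hks, ← Real.rpow_natCast_mul hs.le]; norm_num
  rw [h4] at h₁ h₂ ⊢
  rw [hks] at h₁ h₂
  rw [hpow, hks]
  have hus : u ≤ 3 * s := by nlinarith
  have hb' : 2 * u * D ≤ b * s := by nlinarith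
  calc D * s ^ 3 ≤ b * s ^ 4 / (2 * u) := by
        rw [le_div_iff₀ (by positivity)]
        nlinarith [pow_pos hs 3]
    _ ≤ b * s ^ 4 / (2 * u) * (2 * (u ^ 2 + 1 - s ^ 2) / u ^ 2) := by
        refine le_mul_of_one_le_right (div_nonneg (mul_nonneg (by linarith) (by positivity))
          (by positivity)) ?_
        rw [one_le_div (by positivity)]
        linarith
    _ = b * u * (u ^ 2 + 1 - s ^ 2) * (s ^ 2 / u ^ 2) ^ 2 := by
        field_simp

def blockIndex (b x : ℕ) : ℕ := Nat.log 8 (x / (2 * b))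

noncomputable def waveProfile (b : ℕ) (n : ℤ) : ℝ :=
  if n ≤ 0 then 0 else triangleWave (4 ^ blockIndex b n.toNat) n

lemma two_mul_mul_eight_pow (b m : ℕ) : 2 * b * 8 ^ m = 2 * 4 ^ m * (b * 2 ^ m) := by
  rw [show 8 = 4 * 2 from rfl, mul_pow]; ring

namespace waveProfile

variable {b : ℕ}

lemma mem_Icc (b : ℕ) (n : ℤ) : waveProfile b n ∈ Set.Icc (0 : ℝ) 1 := by
  unfold waveProfile
  split_ifs
  · simp
  · exact triangleWave.mem_Icc (by positivity) n

lemma of_nonpos (b : ℕ) {n : ℤ} (hn : n ≤ 0) : waveProfile b n = 0 := if_pos hn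

lemma natCast (b x : ℕ) : waveProfile b x = triangleWave (4 ^ blockIndex b x) x := by
  rcases Nat.eq_zero_or_pos x with rfl | hx
  · simp [of_nonpos, triangleWave.apply_zero]
  · rw [waveProfile, if_neg (by omega), Int.toNat_natCast]

lemma blockIndex_eq (hb : 0 < b) {m x : ℕ} (h₁ : 2 * b * 8 ^ m ≤ x)
    (h₂ : x < 2 * b * 8 ^ (m + 1)) : blockIndex b x = m :=
  Nat.log_eq_of_pow_le_of_lt_pow ((Nat.le_div_iff_mul_le (by omega)).2 (by linarith))
    ((Nat.div_lt_iff_lt_mul (by omega)).2 (by linarith))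

lemma lt_mul_eight_pow_blockIndex_succ (hb : 0 < b) (x : ℕ) :
    x < 2 * b * 8 ^ (blockIndex b x + 1) := by
  have := Nat.lt_pow_succ_log_self (by norm_num : 1 < 8) (x / (2 * b))
  rw [Nat.div_lt_iff_lt_mul (by omega)] at this
  rw [blockIndex, mul_comm]; exact this

/-- At a block boundary `x + 1 = 2b·8^(m+1)` both waves vanish, as `x + 1` is a multiple of both
periods `2·4^m` and `2·4^(m+1)`. -/
lemma natCast_succ (hb : 0 < b) (x : ℕ) :
    waveProfile b (x + 1 : ℕ) = triangleWave (4 ^ blockIndex b x) (x + 1 : ℕ) := by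
  set m := blockIndex b x
  rw [natCast]
  obtain h | h : x + 1 < _ ∨ x + 1 = _ := Nat.lt_or_eq_of_le (lt_mul_eight_pow_blockIndex_succ hb x)
  · congr 2
    refine le_antisymm (Nat.lt_succ_iff.mp (Nat.log_lt_of_lt_pow' (by omega)
      ((Nat.div_lt_iff_lt_mul (by omega)).2 (by rw [mul_comm]; exact h))))
      (Nat.log_mono_right (Nat.div_le_div_right (Nat.le_succ x)))
  · have hidx : blockIndex b (x + 1) = m + 1 := blockIndex_eq hb h.ge (by
      rw [h, pow_succ _ (m + 1)]; nlinarith [pow_pos (by norm_num : 0 < 8) (m + 1)])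
    have h₁ : ((x + 1 : ℕ) : ℤ) = 2 * ((4 ^ (m + 1) : ℕ) : ℤ) * (b * 2 ^ (m + 1) : ℕ) + 0 := by
      rw [h, two_mul_mul_eight_pow]; push_cast; ring
    have h₂ : ((x + 1 : ℕ) : ℤ) = 2 * ((4 ^ m : ℕ) : ℤ) * (8 * b * 2 ^ m : ℕ) + 0 := by
      rw [h, two_mul_mul_eight_pow]; push_cast; ring
    rw [hidx, h₁, triangleWave.mul_add (by positivity) _ le_rfl (by positivity), ← h₁, h₂,
      triangleWave.mul_add (by positivity) _ le_rfl (by positivity)]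
    simp

lemma ramp (hb : 0 < b) {m q i : ℕ} (hq : q < b * 2 ^ m) (hi : i ≤ 4 ^ m) :
    waveProfile b (2 * b * 8 ^ m + 2 * 4 ^ m * q + i : ℕ) = i / 4 ^ m := by
  have hq' : 2 * 4 ^ m * (q + 1) ≤ 2 * 4 ^ m * (b * 2 ^ m) := Nat.mul_le_mul_left _ hq
  have hblock : 2 * b * 8 ^ m + 2 * 4 ^ m * q + i < 2 * b * 8 ^ (m + 1) := by
    have h8 : 2 * b * 8 ^ (m + 1) = 8 * (2 * 4 ^ m * (b * 2 ^ m)) := by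
      rw [← two_mul_mul_eight_pow]; ring
    rw [h8, two_mul_mul_eight_pow]
    nlinarith [pow_pos (show 0 < 4 by norm_num) m]
  have hcast : ((2 * b * 8 ^ m + 2 * 4 ^ m * q + i : ℕ) : ℤ) =
      2 * ((4 ^ m : ℕ) : ℤ) * ((b * 2 ^ m + q : ℕ) : ℤ) + i := by
    rw [two_mul_mul_eight_pow]; push_cast; ring
  rw [natCast, blockIndex_eq hb (by omega) hblock, hcast,
    triangleWave.mul_add (by positivity) _ (by positivity) (by exact_mod_cast hi)]
  push_cast; rfl

lemma sq_sub_pred_le (hb : 0 < b) (n : ℤ) :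
    (waveProfile b n - waveProfile b (n - 1)) ^ 2 ≤
      (16 * b) ^ (4 / 3 : ℝ) * |(n : ℝ)| ^ (-(4 / 3) : ℝ) := by
  rcases le_or_gt n 0 with hn | hn
  · rw [of_nonpos b hn, of_nonpos b (by omega), sub_zero, zero_pow two_ne_zero]
    positivity
  obtain ⟨x, rfl⟩ : ∃ x : ℕ, n = (x + 1 : ℕ) := ⟨(n - 1).toNat, by omega⟩
  have hpred : ((x + 1 : ℕ) : ℤ) - 1 = x := by push_cast; ring
  have hstep := triangleWave.abs_sub_pred_le (L := 4 ^ blockIndex b x) (by positivity) (x + 1 : ℕ)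
  have hle : |(((x + 1 : ℕ) : ℤ) : ℝ)| ≤ 16 * b * 8 ^ blockIndex b x := by
    have := lt_mul_eight_pow_blockIndex_succ hb x
    rw [pow_succ] at this
    rw [Int.cast_natCast, Nat.abs_cast]
    exact_mod_cast (by linarith : x + 1 ≤ 16 * b * 8 ^ blockIndex b x)
  rw [hpred] at hstep ⊢
  rw [natCast_succ hb, natCast, ← sq_abs]
  calc _ ≤ ((4 ^ blockIndex b x : ℕ) : ℝ)⁻¹ ^ 2 := pow_le_pow_left₀ (abs_nonneg _) hstep 2
    _ ≤ _ := by
      push_cast at hle ⊢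
      exact inv_four_pow_sq_le_rpow (by positivity) (by positivity) hle

lemma summable_sq_sub_pred (hb : 0 < b) :
    Summable fun n => (waveProfile b n - waveProfile b (n - 1)) ^ 2 :=
  .of_nonneg_of_le (fun _ => sq_nonneg _) (sq_sub_pred_le hb)
    ((Real.summable_abs_int_rpow (by norm_num)).mul_left _)

lemma summable_sq_sub (hb : 0 < b) (k : ℕ) :
    Summable fun n => (waveProfile b n - waveProfile b (n - k)) ^ 2 :=
  summable_sq_sub_of_summable_sq_sub_one (summable_sq_sub_pred hb) k

/-- Each of the `b 2^m` teeth of block `m` contributes `4^m + 1 - k` terms equal to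
`(k / 4^m)^2`, from the pairs `n - k, n` on one rising edge. -/
lemma le_tsum_sq_sub (hb : 0 < b) {m k : ℕ} (hk : k ≤ 4 ^ m) :
    b * 2 ^ m * ((4 : ℝ) ^ m + 1 - k) * (k / 4 ^ m) ^ 2 ≤
      ∑' n : ℤ, (waveProfile b n - waveProfile b (n - k)) ^ 2 := by
  set f := fun n : ℤ => (waveProfile b n - waveProfile b (n - k)) ^ 2
  set S := Finset.range (b * 2 ^ m) ×ˢ Finset.Icc k (4 ^ m)
  set e : ℕ × ℕ → ℤ := fun p => ((2 * b * 8 ^ m + 2 * 4 ^ m * p.1 + p.2 : ℕ) : ℤ)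
  have hS {q i : ℕ} : (q, i) ∈ S ↔ q < b * 2 ^ m ∧ k ≤ i ∧ i ≤ 4 ^ m := by
    simp [S]
  have hdivmod {q i : ℕ} (hi : i ≤ 4 ^ m) :
      (2 * 4 ^ m * q + i) / (2 * 4 ^ m) = q ∧ (2 * 4 ^ m * q + i) % (2 * 4 ^ m) = i :=
    (Nat.div_mod_unique (by positivity)).2
      ⟨by ring, by have := Nat.one_le_pow m 4 (by norm_num); omega⟩
  have he : Set.InjOn e S := by
    rintro ⟨q, i⟩ hp ⟨q', i'⟩ hp' heq
    rw [Finset.mem_coe, hS] at hp hp'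
    have h : 2 * 4 ^ m * q + i = 2 * 4 ^ m * q' + i' := by
      have := Nat.cast_injective heq
      dsimp only at this
      omega
    obtain ⟨hq, hi⟩ := hdivmod (q := q) hp.2.2
    obtain ⟨hq', hi'⟩ := hdivmod (q := q') hp'.2.2
    rw [h] at hq hi
    exact Prod.ext (hq.symm.trans hq') (hi.symm.trans hi')
  have hval : ∀ p ∈ S, f (e p) = (k / 4 ^ m) ^ 2 := by
    rintro ⟨q, i⟩ hp
    rw [hS] at hp
    have hshift : e (q, i) - k = ((2 * b * 8 ^ m + 2 * 4 ^ m * q + (i - k) : ℕ) : ℤ) := by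
      push_cast [e, Nat.cast_sub hp.2.1]; ring
    simp only [f]
    rw [hshift, ramp hb hp.1 hp.2.2, ramp hb hp.1 (by omega), Nat.cast_sub hp.2.1]
    ring
  calc _ = ∑ p ∈ S, f (e p) := by
        rw [Finset.sum_congr rfl hval, Finset.sum_const, nsmul_eq_mul, Finset.card_product,
          Finset.card_range, Nat.card_Icc, Nat.cast_mul, Nat.cast_sub (by omega)]
        push_cast; ring
    _ = ∑ n ∈ S.image e, f n := (Finset.sum_image he).symm
    _ ≤ ∑' n, f n := (summable_sq_sub hb k).sum_le_tsum _ (fun _ _ => sq_nonneg _)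

lemma summable_and_rpow_le_tsum (hb₀ : 0 < b) {D : ℝ} (hD : 0 ≤ D) (hb : 6 * D ≤ b) (k : ℕ) :
    Summable (fun n => (waveProfile b n - waveProfile b (n - k)) ^ 2) ∧
      D * (k : ℝ) ^ (3 / 2 : ℝ) ≤ ∑' n, (waveProfile b n - waveProfile b (n - k)) ^ 2 := by
  refine ⟨summable_sq_sub hb₀ k, ?_⟩
  rcases Nat.eq_zero_or_pos k with rfl | hk
  · simp
  obtain ⟨m, h₁, h₂⟩ := exists_four_pow_mem_Icc hk
  exact (mul_rpow_three_halves_le hD hb (by positivity) (by exact_mod_cast h₁)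
    (by exact_mod_cast h₂)).trans (le_tsum_sq_sub hb₀ (by omega))

end waveProfile

theorem stmt13 (D : ℝ) (hD : 0 < D) :
    ∃ H : ℤ → ℝ, (∀ n, H n ∈ Set.Icc (0 : ℝ) 1) ∧ (∀ n ≤ 0, H n = 0) ∧
      ∀ k : ℤ, Summable (fun n : ℤ => (H n - H (n - k)) ^ 2) ∧
        D * |(k : ℝ)| ^ (3 / 2 : ℝ) ≤ ∑' n : ℤ, (H n - H (n - k)) ^ 2 := by
  have hb : 6 * D ≤ ⌈6 * D⌉₊ := Nat.le_ceil _
  have hb₀ : 0 < ⌈6 * D⌉₊ := Nat.ceil_pos.2 (by positivity)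
  exact ⟨waveProfile ⌈6 * D⌉₊, waveProfile.mem_Icc _, fun _ => waveProfile.of_nonpos _,
    forall_int_of_forall_nat (waveProfile.summable_and_rpow_le_tsum hb₀ hD.le hb)⟩
end

section
/- Let G be a countable group acting freely on a countable set I, let F : I → [1/3, 2/3], and suppose for every g ∈ G that c_g(i) := F(i) - F(g^{-1}·i) defines an element of ℓ²(I). Let μ_i be the measure on {0,1} with μ_i(0) = F(i) and let ω_n(g,x) = ∏_{k=1}^n μ_{g·i_k}(x_{i_k})/μ_{i_k}(x_{i_k}) for an enumeration I = {i₁, i₂, …}. Then for every g ∈ G and every n, ∫_X √(ω_n(g,x)) dμ(x) = ∏_{k=1}^n (√(F(i_k)F(g·i_k)) + √((1-F(i_k))(1-F(g·i_k)))) ≥ exp(-(3/5) ‖c_g‖₂²). -/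
/-! The integrand is a product of functions of single coordinates, so the integral factors into
one-coordinate integrals, each equal to the Bhattacharyya coefficient `√(pq) + √((1-p)(1-q))` of
the Bernoulli laws with `p = F i`, `q = F (g • i)`. For `p, q ∈ [1/3, 2/3]` this coefficient is at
least `(1 + 3/5 (p - q)²)⁻¹ ≥ exp (-3/5 (p - q)²)`, and `(p - q)² = c g (g • i) ^ 2`; since
`i ↦ g • i` is injective, these squares sum to at most `‖c g‖₂²`. -/

open MeasureTheory Real

instance MeasureTheory.isFiniteMeasure_ofReal_smul {α : Type*} [MeasurableSpace α] (μ : Measure α)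
    [IsFiniteMeasure μ] (r : ℝ) : IsFiniteMeasure (ENNReal.ofReal r • μ) :=
  μ.smul_finite ENNReal.ofReal_ne_top

theorem integral_ofReal_smul_dirac_add {p q : ℝ} (hp : 0 ≤ p) (hq : 0 ≤ q) (f : Bool → ℝ) :
    ∫ x, f x ∂(ENNReal.ofReal p • Measure.dirac false + ENNReal.ofReal q • Measure.dirac true) =
      p * f false + q * f true := by
  rw [integral_add_measure .of_finite .of_finite, integral_smul_measure, integral_smul_measure,
    integral_dirac, integral_dirac, ENNReal.toReal_ofReal hp, ENNReal.toReal_ofReal hq,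
    smul_eq_mul, smul_eq_mul]

theorem Real.mul_sqrt_div_eq_sqrt_mul {a b : ℝ} (ha : 0 < a) (hb : 0 ≤ b) :
    a * √(b / a) = √(a * b) := by
  rw [sqrt_div hb, sqrt_mul ha.le, mul_div_left_comm, div_sqrt, mul_comm]

theorem integral_sqrt_ratio_bernoulli {p q : ℝ} (hp : p ∈ Set.Ioo 0 1) (hq : q ∈ Set.Icc 0 1) :
    ∫ x : Bool, √((if x then 1 - q else q) / (if x then 1 - p else p))
        ∂(ENNReal.ofReal p • Measure.dirac false + ENNReal.ofReal (1 - p) • Measure.dirac true) =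
      √(p * q) + √((1 - p) * (1 - q)) := by
  obtain ⟨hp0, hp1⟩ := hp
  obtain ⟨hq0, hq1⟩ := hq
  rw [integral_ofReal_smul_dirac_add hp0.le (sub_nonneg.2 hp1.le)]
  simp only [Bool.false_eq_true, if_true, if_false]
  rw [mul_sqrt_div_eq_sqrt_mul hp0 hq0, mul_sqrt_div_eq_sqrt_mul (sub_pos.2 hp1) (sub_nonneg.2 hq1)]

theorem integral_sqrt_prod_eq_prod {ι : Type*} [Fintype ι] {E : ι → Type*}
    [∀ i, MeasurableSpace (E i)] (μ : ∀ i, Measure (E i)) [∀ i, SigmaFinite (μ i)]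
    (f : ∀ i, E i → ℝ) (hf : ∀ i x, 0 ≤ f i x) :
    ∫ x, √(∏ i, f i (x i)) ∂Measure.pi μ = ∏ i, ∫ y, √(f i y) ∂μ i := by
  simp_rw [sqrt_prod _ fun i _ => hf i _]
  exact integral_fintype_prod_eq_prod (μ := μ) fun i y => √(f i y)

/- With `(s, u) = (cos θ, sin θ)` and `(t, v) = (cos φ, sin φ)`: `c = cos (θ - φ)`,
`S = sin (θ + φ)` and `s² - t² = -S sin (θ - φ)`, so the claim reads
`1 - c ≤ 3/5 c S² (1 - c) (1 + c)`, and `c S² (1 + c) ≥ 2 (S c)² ≥ 16/9`. -/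
theorem one_le_inner_mul_one_add_sq_sub_sq {s t u v : ℝ} (hs : 0 ≤ s) (ht : 0 ≤ t) (hu : 0 ≤ u)
    (hv : 0 ≤ v) (hsu : s ^ 2 + u ^ 2 = 1) (htv : t ^ 2 + v ^ 2 = 1)
    (hsu' : 2 / 9 ≤ (s * u) ^ 2) (htv' : 2 / 9 ≤ (t * v) ^ 2) :
    1 ≤ (s * t + u * v) * (1 + 3 / 5 * (s ^ 2 - t ^ 2) ^ 2) := by
  set c := s * t + u * v
  set S := u * t + s * v
  have hc0 : 0 ≤ c := by positivity
  have hS0 : 0 ≤ S := by positivity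
  have hsin : 1 - c ^ 2 = (u * t - s * v) ^ 2 := by
    linear_combination (-(t ^ 2 + v ^ 2)) * hsu - htv
  have hc1 : c ≤ 1 := by nlinarith [sq_nonneg (u * t - s * v)]
  have hdiff : s ^ 2 - t ^ 2 = -(S * (u * t - s * v)) := by
    linear_combination t ^ 2 * hsu - s ^ 2 * htv
  have hSc : S * c = s * u + t * v := by linear_combination (u * s) * htv + (t * v) * hsu
  have hSc2 : 8 / 9 ≤ (S * c) ^ 2 := by
    have hprod : 2 / 9 ≤ s * u * (t * v) := by
      refine le_of_pow_le_pow_left₀ two_ne_zero (by positivity) ?_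
      rw [mul_pow]
      calc (2 / 9 : ℝ) ^ 2 = 2 / 9 * (2 / 9) := sq _
        _ ≤ _ := mul_le_mul hsu' htv' (by norm_num) (by positivity)
    rw [hSc]
    nlinarith
  have hScS : S * c ≤ S := mul_le_of_le_one_right hS0 hc1
  have key : 1 ≤ 3 / 5 * (c * S ^ 2 * (1 + c)) := by nlinarith
  have hd : (s ^ 2 - t ^ 2) ^ 2 = S ^ 2 * (1 - c ^ 2) := by rw [hdiff, hsin]; ring
  rw [hd]
  nlinarith [mul_nonneg (sub_nonneg.2 hc1) (sub_nonneg.2 key)]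

theorem Real.exp_neg_le_inv_one_add {x : ℝ} (hx : 0 ≤ x) : exp (-x) ≤ (1 + x)⁻¹ := by
  rw [exp_neg]
  exact inv_anti₀ (by positivity) ((add_comm 1 x).trans_le (add_one_le_exp x))

theorem exp_neg_le_sqrt_mul_add_sqrt_one_sub_mul {a b : ℝ} (ha : a ∈ Set.Icc (1 / 3 : ℝ) (2 / 3))
    (hb : b ∈ Set.Icc (1 / 3 : ℝ) (2 / 3)) :
    exp (-(3 / 5) * (a - b) ^ 2) ≤ √(a * b) + √((1 - a) * (1 - b)) := by
  obtain ⟨ha1, ha2⟩ := ha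
  obtain ⟨hb1, hb2⟩ := hb
  have hvar {r : ℝ} (hr1 : 1 / 3 ≤ r) (hr2 : r ≤ 2 / 3) : 2 / 9 ≤ (√r * √(1 - r)) ^ 2 := by
    rw [mul_pow, sq_sqrt (by linarith), sq_sqrt (by linarith)]
    nlinarith
  have hBC := one_le_inner_mul_one_add_sq_sub_sq (sqrt_nonneg a) (sqrt_nonneg b)
    (sqrt_nonneg (1 - a)) (sqrt_nonneg (1 - b))
    (by rw [sq_sqrt (by linarith), sq_sqrt (by linarith)]; ring)
    (by rw [sq_sqrt (by linarith), sq_sqrt (by linarith)]; ring) (hvar ha1 ha2) (hvar hb1 hb2)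
  rw [sq_sqrt (by linarith), sq_sqrt (by linarith), ← sqrt_mul (by linarith),
    ← sqrt_mul (by linarith)] at hBC
  calc exp (-(3 / 5) * (a - b) ^ 2) = exp (-(3 / 5 * (a - b) ^ 2)) := by rw [neg_mul]
    _ ≤ (1 + 3 / 5 * (a - b) ^ 2)⁻¹ := exp_neg_le_inv_one_add (by positivity)
    _ ≤ _ := (inv_le_iff_one_le_mul₀ (by positivity)).2 hBC

open MeasureTheory in
theorem stmt19_general {G I : Type*} [Group G] [MulAction G I]
    (F : I → ℝ) (hF : ∀ i, F i ∈ Set.Icc (1/3 : ℝ) (2/3))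
    (c : G → I → ℝ) (hc : ∀ g i, c g i = F i - F (g⁻¹ • i))
    (hl2 : ∀ g : G, Summable (fun i : I => (c g i) ^ 2))
    (e : ℕ ≃ I)
    (w : I → Bool → ℝ) (hw : ∀ i x, w i x = if x then 1 - F i else F i)
    (g : G) (n : ℕ) :
    (∫ x : Fin n → Bool,
        Real.sqrt (∏ k : Fin n, w (g • e (k : ℕ)) (x k) / w (e (k : ℕ)) (x k))
        ∂(Measure.pi fun k : Fin n =>
            ENNReal.ofReal (F (e (k : ℕ))) • Measure.dirac false +
              ENNReal.ofReal (1 - F (e (k : ℕ))) • Measure.dirac true))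
      = ∏ k : Fin n, (Real.sqrt (F (e (k : ℕ)) * F (g • e (k : ℕ))) +
          Real.sqrt ((1 - F (e (k : ℕ))) * (1 - F (g • e (k : ℕ))))) ∧
    Real.exp (-(3/5) * ∑' i : I, (c g i) ^ 2) ≤
      ∏ k : Fin n, (Real.sqrt (F (e (k : ℕ)) * F (g • e (k : ℕ))) +
          Real.sqrt ((1 - F (e (k : ℕ))) * (1 - F (g • e (k : ℕ))))) := by
  have hw0 (i : I) (x : Bool) : 0 ≤ w i x := by
    rw [hw]; split_ifs <;> linarith [(hF i).1, (hF i).2]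
  refine ⟨?_, ?_⟩
  · refine (integral_sqrt_prod_eq_prod _ (fun (k : Fin n) b => w (g • e k) b / w (e k) b)
      fun _ _ => div_nonneg (hw0 _ _) (hw0 _ _)).trans ?_
    simp only [hw]
    exact Finset.prod_congr rfl fun k _ => integral_sqrt_ratio_bernoulli
      (Set.Icc_subset_Ioo (by norm_num) (by norm_num) (hF _))
      (Set.Icc_subset_Icc (by norm_num) (by norm_num) (hF _))
  · have hinj : Function.Injective fun k : Fin n => g • e k :=
      (MulAction.injective g).comp (e.injective.comp Fin.val_injective)
    have hsum : ∑ k : Fin n, c g (g • e k) ^ 2 ≤ ∑' i, c g i ^ 2 :=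
      (tsum_fintype _).symm.trans_le (tsum_comp_le_tsum_of_inj (hl2 g) (fun _ => sq_nonneg _) hinj)
    calc exp (-(3 / 5) * ∑' i, c g i ^ 2)
        ≤ exp (-(3 / 5) * ∑ k : Fin n, c g (g • e k) ^ 2) := exp_le_exp.2 (by linarith)
      _ = ∏ k : Fin n, exp (-(3 / 5) * c g (g • e k) ^ 2) := by rw [Finset.mul_sum, exp_sum]
      _ ≤ _ := by
        refine Finset.prod_le_prod (fun _ _ => (exp_pos _).le) fun k _ => ?_
        rw [hc, inv_smul_smul, sub_sq_comm]
        exact exp_neg_le_sqrt_mul_add_sqrt_one_sub_mul (hF _) (hF _)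

open MeasureTheory in
theorem stmt19 {G I : Type*} [Group G] [Countable G] [Countable I] [MulAction G I]
    (hfree : ∀ (g : G) (i : I), g • i = i → g = 1)
    (F : I → ℝ) (hF : ∀ i, F i ∈ Set.Icc (1/3 : ℝ) (2/3))
    (c : G → I → ℝ) (hc : ∀ g i, c g i = F i - F (g⁻¹ • i))
    (hl2 : ∀ g : G, Summable (fun i : I => (c g i) ^ 2))
    (e : ℕ ≃ I)
    (w : I → Bool → ℝ) (hw : ∀ i x, w i x = if x then 1 - F i else F i)
    (g : G) (n : ℕ) :
    (∫ x : Fin n → Bool,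
        Real.sqrt (∏ k : Fin n, w (g • e (k : ℕ)) (x k) / w (e (k : ℕ)) (x k))
        ∂(Measure.pi fun k : Fin n =>
            ENNReal.ofReal (F (e (k : ℕ))) • Measure.dirac false +
              ENNReal.ofReal (1 - F (e (k : ℕ))) • Measure.dirac true))
      = ∏ k : Fin n, (Real.sqrt (F (e (k : ℕ)) * F (g • e (k : ℕ))) +
          Real.sqrt ((1 - F (e (k : ℕ))) * (1 - F (g • e (k : ℕ))))) ∧
    Real.exp (-(3/5) * ∑' i : I, (c g i) ^ 2) ≤
      ∏ k : Fin n, (Real.sqrt (F (e (k : ℕ)) * F (g • e (k : ℕ))) +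
          Real.sqrt ((1 - F (e (k : ℕ))) * (1 - F (g • e (k : ℕ))))) :=
  stmt19_general F hF c hc hl2 e w hw g n
end
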